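/- arXiv:2006.14053 — 4 statements merged into one kernel-verified Lean document; each statement's English description precedes it below -/
import Mathlib

section
/- Let G be a locally compact Hausdorff topological group and X a Tychonoff G-space. Then X is a proper G-space in the sense of Palais if and only if X is a Cartan G-space and the orbit space X/G is regular. In particular, every proper G-space is a Cartan G-space. -/
/-- A subset `S` of a `G`-space `X` is small (in the sense of Palais). -/
def IsSmallSet (G : Type*) {X : Type*} [SMul G X] [TopologicalSpace G] [TopologicalSpace X]
    (S : Set X) : Prop :=
  ∀ x : X, ∃ V ∈ nhds x, IsCompact (closure {g : G | ∃ s ∈ S, g • s ∈ V})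

/-- A `G`-space `X` is proper in the sense of Palais: it has an open cover consisting of
small sets. -/
def PalaisProper (G X : Type*) [SMul G X] [TopologicalSpace G] [TopologicalSpace X] : Prop :=
  ∃ 𝒰 : Set (Set X), (∀ U ∈ 𝒰, IsOpen U) ∧ ⋃₀ 𝒰 = Set.univ ∧ ∀ U ∈ 𝒰, IsSmallSet G U

/-- A `G`-space `X` is a Cartan `G`-space: every point has a thin neighborhood `V`, i.e. one
such that `{g : G | gV ∩ V ≠ ∅}` has compact closure in `G`. -/
def IsCartan (G X : Type*) [SMul G X] [TopologicalSpace G] [TopologicalSpace X] : Prop :=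
  ∀ x : X, ∃ V ∈ nhds x, IsCompact (closure {g : G | ∃ v ∈ V, g • v ∈ V})

/-!
If `C` is a closed small set and `V` a neighbourhood of `y` as in the definition, then near `y`
the saturation `G • C` coincides with `K • C` for the compact `K = closure {g | gC ∩ V ≠ ∅}`, and
`K • C` is closed; so closed small sets have closed images in `X/G`. When `X` is proper and
regular, the images of closed small neighbourhoods therefore form a base of closed neighbourhoods
in `X/G`.

Conversely, let `V` be a thin neighbourhood of `x`. If `g₀ • y ∈ interior V`, then `g₀⁻¹ • V` is
a neighbourhood of `y` met by `g • V` only for `g` in the relatively compact set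
`g₀⁻¹ • {g | gV ∩ V ≠ ∅}`. Regularity of `X/G` gives a closed neighbourhood `C` of the orbit of
`x` inside the image of `interior V`; then `V ∩ π⁻¹ C` is small, the points outside `π⁻¹ C`
having the neighbourhood `π⁻¹ Cᶜ`, which no translate of `π⁻¹ C` meets.
-/

open Set Topology Pointwise

def IsThinSet (G : Type*) {X : Type*} [SMul G X] [TopologicalSpace G] (V : Set X) : Prop :=
  IsCompact (closure {g : G | ∃ v ∈ V, g • v ∈ V})

section SMul

variable {G X : Type*} [SMul G X] [TopologicalSpace G] [TopologicalSpace X]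

theorem IsSmallSet.mono {S T : Set X} (hST : S ⊆ T) (hT : IsSmallSet G T) : IsSmallSet G S :=
  fun x ↦
    let ⟨V, hV, hK⟩ := hT x
    ⟨V, hV, hK.of_isClosed_subset isClosed_closure <|
      closure_mono fun _ ⟨s, hs, hgs⟩ ↦ ⟨s, hST hs, hgs⟩⟩

theorem palaisProper_iff_forall_exists_isOpen_isSmallSet :
    PalaisProper G X ↔ ∀ x : X, ∃ U, IsOpen U ∧ x ∈ U ∧ IsSmallSet G U := by
  constructor
  · rintro ⟨𝒰, hopen, hcover, hsmall⟩ x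
    obtain ⟨U, hU, hxU⟩ := mem_sUnion.1 (hcover ▸ mem_univ x)
    exact ⟨U, hopen U hU, hxU, hsmall U hU⟩
  · intro h
    refine ⟨{U | IsOpen U ∧ IsSmallSet G U}, fun U hU ↦ hU.1, ?_, fun U hU ↦ hU.2⟩
    refine eq_univ_of_forall fun x ↦ ?_
    obtain ⟨U, hU, hxU, hsmall⟩ := h x
    exact ⟨U, ⟨hU, hsmall⟩, hxU⟩

theorem PalaisProper.isCartan (h : PalaisProper G X) : IsCartan G X := by
  intro x
  obtain ⟨U, hU, hxU, hsmall⟩ := palaisProper_iff_forall_exists_isOpen_isSmallSet.1 h x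
  obtain ⟨V, hV, hK⟩ := hsmall x
  refine ⟨U ∩ V, Filter.inter_mem (hU.mem_nhds hxU) hV, hK.of_isClosed_subset isClosed_closure ?_⟩
  exact closure_mono fun _ ⟨v, hv, hgv⟩ ↦ ⟨v, hv.1, hgv.2⟩

end SMul

section Group

variable {G X : Type*} [Group G] [TopologicalSpace G] [TopologicalSpace X] [MulAction G X]

theorem IsSmallSet.isClosed_iUnion_smul [ContinuousInv G] [ContinuousSMul G X] {C : Set X}
    (hC : IsClosed C) (hsmall : IsSmallSet G C) : IsClosed (⋃ g : G, g • C) := by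
  refine isClosed_of_closure_subset fun y hy ↦ ?_
  obtain ⟨V, hV, hK⟩ := hsmall y
  set K := closure {g : G | ∃ s ∈ C, g • s ∈ V}
  have hsub : V ∩ ⋃ g : G, g • C ⊆ K • C := by
    rintro _ ⟨hzV, hz⟩
    obtain ⟨g, c, hc, rfl⟩ := mem_iUnion.1 hz
    exact smul_mem_smul (subset_closure ⟨c, hc, hzV⟩) hc
  have hyV : y ∈ closure (interior V ∩ ⋃ g : G, g • C) :=
    isOpen_interior.inter_closure ⟨mem_interior_iff_mem_nhds.2 hV, hy⟩
  obtain ⟨g, hg, c, hc, rfl⟩ := (hC.smul_left_of_isCompact hK).closure_subset_iff.2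
    ((inter_subset_inter_left _ interior_subset).trans hsub) hyV
  exact mem_iUnion.2 ⟨g, smul_mem_smul_set hc⟩

theorem IsSmallSet.isClosed_image_mk [ContinuousInv G] [ContinuousSMul G X] {C : Set X}
    (hC : IsClosed C) (hsmall : IsSmallSet G C) :
    IsClosed (Quotient.mk (MulAction.orbitRel G X) '' C) := by
  let _ := MulAction.orbitRel G X
  change IsClosed (Quotient.mk' '' C)
  rw [← isQuotientMap_quotient_mk'.isClosed_preimage,
    MulAction.quotient_preimage_image_eq_union_mul]
  simpa only [image_smul] using hsmall.isClosed_iUnion_smul hC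

theorem PalaisProper.regularSpace_quotient [RegularSpace X] [ContinuousInv G] [ContinuousSMul G X]
    (h : PalaisProper G X) : RegularSpace (Quotient (MulAction.orbitRel G X)) := by
  let _ := MulAction.orbitRel G X
  refine RegularSpace.of_exists_mem_nhds_isClosed_subset fun q s hs ↦ ?_
  obtain ⟨x, rfl⟩ := Quotient.exists_rep q
  obtain ⟨U, hU, hxU, hsmall⟩ := palaisProper_iff_forall_exists_isOpen_isSmallSet.1 h x
  obtain ⟨C, hC, hC_closed, hCsub⟩ := exists_mem_nhds_isClosed_subset <|
    Filter.inter_mem (continuous_quotient_mk'.continuousAt.preimage_mem_nhds hs) (hU.mem_nhds hxU)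
  exact ⟨_, isOpenMap_quotient_mk'_mul.image_mem_nhds hC,
    (hsmall.mono (hCsub.trans inter_subset_right)).isClosed_image_mk hC_closed,
    image_subset_iff.2 (hCsub.trans inter_subset_left)⟩

theorem IsThinSet.exists_mem_nhds_isCompact_closure [ContinuousConstSMul G G]
    [ContinuousConstSMul G X] {V : Set X} (hV : IsThinSet G V) {y : X} {g₀ : G}
    (hy : g₀ • y ∈ interior V) :
    ∃ W ∈ 𝓝 y, IsCompact (closure {g : G | ∃ s ∈ V, g • s ∈ W}) := by
  refine ⟨g₀⁻¹ • V, ?_, ?_⟩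
  · simpa only [inv_smul_smul] using
      (smul_mem_nhds_smul_iff (t := V) g₀⁻¹).2 (mem_interior_iff_mem_nhds.1 hy)
  · have hK : IsCompact (g₀⁻¹ • closure {g : G | ∃ v ∈ V, g • v ∈ V}) := hV.smul g₀⁻¹
    rw [← closure_smul] at hK
    refine hK.of_isClosed_subset isClosed_closure (closure_mono ?_)
    rintro g ⟨s, hs, hgs⟩
    rw [mem_smul_set_iff_inv_smul_mem, inv_inv] at hgs ⊢
    exact ⟨s, hs, by rwa [smul_eq_mul, mul_smul]⟩

theorem IsThinSet.isSmallSet_inter_preimage [ContinuousConstSMul G G] [ContinuousConstSMul G X]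
    {V : Set X} (hV : IsThinSet G V) {C : Set (Quotient (MulAction.orbitRel G X))}
    (hC : IsClosed C) (hCV : C ⊆ Quotient.mk _ '' interior V) :
    IsSmallSet G (V ∩ Quotient.mk _ ⁻¹' C) := by
  intro y
  by_cases hy : Quotient.mk _ y ∈ C
  · obtain ⟨v, hv, hvy⟩ := hCV hy
    obtain ⟨g₀, rfl⟩ := MulAction.orbitRel_apply.1 (Quotient.exact hvy)
    obtain ⟨W, hW, hK⟩ := hV.exists_mem_nhds_isCompact_closure hv
    exact ⟨W, hW, hK.of_isClosed_subset isClosed_closure <|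
      closure_mono fun g ⟨s, hs, hgs⟩ ↦ ⟨s, hs.1, hgs⟩⟩
  · refine ⟨_, (hC.isOpen_compl.preimage continuous_quotient_mk').mem_nhds hy, ?_⟩
    convert isCompact_empty
    refine closure_empty_iff _ |>.2 <| eq_empty_of_forall_notMem fun g ⟨s, hs, hgs⟩ ↦ hgs ?_
    have hgs_s : Quotient.mk (MulAction.orbitRel G X) (g • s) = Quotient.mk _ s :=
      Quotient.sound (MulAction.orbitRel_apply.2 (MulAction.mem_orbit s g))
    show Quotient.mk _ (g • s) ∈ C
    exact hgs_s ▸ hs.2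

theorem IsCartan.palaisProper [ContinuousConstSMul G G] [ContinuousConstSMul G X]
    [RegularSpace (Quotient (MulAction.orbitRel G X))] (h : IsCartan G X) :
    PalaisProper G X := by
  let _ := MulAction.orbitRel G X
  refine palaisProper_iff_forall_exists_isOpen_isSmallSet.2 fun x ↦ ?_
  obtain ⟨V, hV, hthin⟩ := h x
  have hxV : x ∈ interior V := mem_interior_iff_mem_nhds.2 hV
  obtain ⟨C, hC, hC_closed, hCV⟩ := exists_mem_nhds_isClosed_subset <|
    (isOpenMap_quotient_mk'_mul (Γ := G)).image_mem_nhds (isOpen_interior.mem_nhds hxV)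
  refine ⟨interior V ∩ Quotient.mk' ⁻¹' interior C,
    isOpen_interior.inter (isOpen_interior.preimage continuous_quotient_mk'),
    ⟨hxV, mem_interior_iff_mem_nhds.2 hC⟩, ?_⟩
  exact (IsThinSet.isSmallSet_inter_preimage hthin hC_closed hCV).mono
    (inter_subset_inter interior_subset (preimage_mono interior_subset))

end Group

theorem statement3_general {G X : Type*} [Group G] [TopologicalSpace G] [IsTopologicalGroup G]
    [TopologicalSpace X] [MulAction G X] [ContinuousSMul G X] [T35Space X] :
    PalaisProper G X ↔
      (IsCartan G X ∧ RegularSpace (Quotient (MulAction.orbitRel G X))) := by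
  refine ⟨fun h ↦ ⟨h.isCartan, h.regularSpace_quotient⟩, fun ⟨hC, _⟩ ↦ hC.palaisProper⟩

/-- For a locally compact Hausdorff group `G` and a Tychonoff `G`-space `X`,
`X` is a proper `G`-space in the sense of Palais iff `X` is a Cartan `G`-space and the orbit
space `X/G` is regular. (In particular every proper `G`-space is Cartan.) -/
theorem statement3 {G X : Type*} [Group G] [TopologicalSpace G] [IsTopologicalGroup G]
    [LocallyCompactSpace G] [T2Space G]
    [TopologicalSpace X] [MulAction G X] [ContinuousSMul G X] [T35Space X] :
    PalaisProper G X ↔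
      (IsCartan G X ∧ RegularSpace (Quotient (MulAction.orbitRel G X))) :=
  statement3_general
end

section
/- Let G be a locally compact Hausdorff topological group and X a Tychonoff G-space which is a Cartan G-space. Then for every x ∈ X: (1) the map g ↦ gx is an open map from G onto the orbit G(x) (with its subspace topology); (2) the orbit G(x) is closed in X, the stabilizer G_x is compact, and G(x) is G-homeomorphic to the coset space G/G_x, i.e., there is a G-equivariant homeomorphism from G/G_x onto G(x). -/
/-! Everything rests on one compactness argument: if `g • z → y` along a filter on `G`, where `z`
lies in a thin neighbourhood `V` of `y`, then the filter eventually lies in the relatively compact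
set `{g | gV ∩ V ≠ ∅}`, so it clusters at some `h`, and `h • z = y` by continuity. With `z` an
orbit point near a point `y` of the closure of `G(x)` this puts `y` in the orbit. With `z = y = x`
it shows that `g • x → x` forces `g` to approach the stabilizer, so after a right translation by a
stabilizer element `g` is close to `1`: this is openness of `g ↦ g • x` onto `G(x)`. An open
continuous orbit map descends to a homeomorphism `G ⧸ G_x ≃ₜ G(x)`. -/

open Filter Topology Set MulAction

theorem exists_clusterPt_smul_eq_of_tendsto {G X : Type*} [TopologicalSpace G]
    [TopologicalSpace X] [T2Space X] [SMul G X] [ContinuousSMul G X] {V : Set X}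
    (hV : IsCompact (closure {g : G | ∃ v ∈ V, g • v ∈ V})) {y z : X} (hVy : V ∈ 𝓝 y)
    (hz : z ∈ V) {l : Filter G} [l.NeBot] (hl : Tendsto (· • z) l (𝓝 y)) :
    ∃ h, ClusterPt h l ∧ h • z = y := by
  have hl_thin : l ≤ 𝓟 (closure {g : G | ∃ v ∈ V, g • v ∈ V}) :=
    le_principal_iff.mpr <| mem_of_superset (hl hVy) fun g hg => subset_closure ⟨z, hz, hg⟩
  obtain ⟨h, -, hh⟩ := hV.exists_clusterPt hl_thin
  have hcont : ContinuousAt (· • z) h := (continuous_id.smul continuous_const).continuousAt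
  exact ⟨h, hh, eq_of_nhds_neBot (hh.map hcont hl)⟩

section

variable {G X : Type*} [Group G] [TopologicalSpace G] [TopologicalSpace X] [MulAction G X]
  [ContinuousSMul G X]

namespace MulAction

variable (G) in
def orbitMap (x : X) (g : G) : orbit G x := ⟨g • x, mem_orbit x g⟩

variable (G) in
noncomputable def quotientStabilizerHomeomorphOrbit (x : X) (h : IsOpenMap (orbitMap G x)) :
    G ⧸ stabilizer G x ≃ₜ orbit G x :=
  (orbitEquivQuotientStabilizer G x).symm.toHomeomorphOfContinuousOpen
    ((QuotientGroup.isQuotientMap_mk _).continuous_iff.mpr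
      ((continuous_id.smul continuous_const).subtype_mk _))
    (h.of_comp continuous_quot_mk QuotientGroup.mk_surjective)

theorem quotientStabilizerHomeomorphOrbit_smul (x : X) (h : IsOpenMap (orbitMap G x))
    (g : G) (q : G ⧸ stabilizer G x) :
    (quotientStabilizerHomeomorphOrbit G x h (g • q) : X) =
      g • (quotientStabilizerHomeomorphOrbit G x h q : X) :=
  ofQuotientStabilizer_smul G x g q

end MulAction

namespace IsCartan

theorem isClosed_orbit [T2Space X] (hC : IsCartan G X) (x : X) : IsClosed (orbit G x) := by
  refine isClosed_of_closure_subset fun y hy => ?_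
  obtain ⟨V, hVy, hV⟩ := hC y
  obtain ⟨z, hzV, g, rfl⟩ := mem_closure_iff_nhds.mp hy V hVy
  have : (comap (· • g • x) (𝓝 y)).NeBot := comap_neBot fun t ht => by
    obtain ⟨-, hwt, a, rfl⟩ := mem_closure_iff_nhds.mp hy t ht
    exact ⟨a * g⁻¹, by simpa [mul_smul] using hwt⟩
  obtain ⟨h, -, rfl⟩ := exists_clusterPt_smul_eq_of_tendsto hV hVy hzV tendsto_comap
  exact ⟨h * g, mul_smul h g x⟩

theorem isCompact_stabilizer [T1Space X] (hC : IsCartan G X) (x : X) :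
    IsCompact (stabilizer G x : Set G) := by
  obtain ⟨V, hV, hK⟩ := hC x
  refine hK.of_isClosed_subset ?_ fun g hg => subset_closure ⟨x, mem_of_mem_nhds hV, ?_⟩
  · exact isClosed_singleton.preimage (continuous_id.smul continuous_const : Continuous (· • x))
  · rw [mem_stabilizer_iff.mp hg]
    exact mem_of_mem_nhds hV

theorem image_smul_mem_nhdsWithin_orbit_of_mem_nhds_one [T2Space X] [ContinuousMul G]
    (hC : IsCartan G X) (x : X) {S : Set G} (hS : S ∈ 𝓝 1) :
    (· • x) '' S ∈ 𝓝[orbit G x] x := by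
  by_contra hnot
  set l := comap (fun g : G => g • x) (𝓝 x ⊓ 𝓟 ((· • x) '' S)ᶜ)
  have : l.NeBot := by
    rw [comap_neBot_iff_frequently, frequently_inf_principal]
    rw [mem_nhdsWithin_iff_eventually, not_eventually] at hnot
    exact hnot.mono fun y hy => (Classical.not_imp.mp hy).symm
  obtain ⟨V, hVx, hV⟩ := hC x
  obtain ⟨h, hh, hhx⟩ := exists_clusterPt_smul_eq_of_tendsto hV hVx (mem_of_mem_nhds hVx)
    (tendsto_comap.mono_right inf_le_left : Tendsto (· • x) l (𝓝 x))
  -- `h` fixes `x`, so `g ↦ g * h⁻¹` moves points near `h` into `S` without changing `g • x`.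
  have hSh : (· * h⁻¹) ⁻¹' S ∈ 𝓝 h :=
    (continuous_mul_const h⁻¹).continuousAt.preimage_mem_nhds (by simpa using hS)
  obtain ⟨g, hgS, hg⟩ := clusterPt_iff_nonempty.mp hh hSh
    (preimage_mem_comap (mem_inf_of_right (mem_principal_self _)))
  exact hg ⟨g * h⁻¹, hgS, by simp only [mul_smul, inv_smul_eq_iff.mpr hhx.symm]⟩

theorem isOpenMap_orbitMap [T2Space X] [ContinuousMul G] (hC : IsCartan G X) (x : X) :
    IsOpenMap (orbitMap G x) := by
  intro U hU
  refine isOpen_iff_mem_nhds.mpr ?_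
  rintro _ ⟨g₀, hg₀, rfl⟩
  have hU₁ : (· * g₀) ⁻¹' U ∈ 𝓝 1 :=
    (hU.preimage (continuous_mul_const g₀)).mem_nhds (by simpa using hg₀)
  have hnhds := hC.image_smul_mem_nhdsWithin_orbit_of_mem_nhds_one (g₀ • x) hU₁
  rw [orbit_smul] at hnhds
  rw [mem_nhds_subtype_iff_nhdsWithin]
  refine mem_of_superset hnhds ?_
  rintro _ ⟨g, hg, rfl⟩
  exact ⟨orbitMap G x (g * g₀), ⟨_, hg, rfl⟩, mul_smul g g₀ x⟩

end IsCartan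

end

theorem statement4_general {G X : Type*} [Group G] [TopologicalSpace G] [IsTopologicalGroup G]
    [TopologicalSpace X] [MulAction G X] [ContinuousSMul G X] [T35Space X]
    (hC : IsCartan G X) (x : X) :
    IsOpenMap (fun g : G => (⟨g • x, MulAction.mem_orbit x g⟩ : MulAction.orbit G x)) ∧
    IsClosed (MulAction.orbit G x) ∧
    IsCompact (MulAction.stabilizer G x : Set G) ∧
    ∃ f : G ⧸ MulAction.stabilizer G x ≃ₜ MulAction.orbit G x,
      ∀ (g : G) (q : G ⧸ MulAction.stabilizer G x), (f (g • q) : X) = g • (f q : X) :=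
  ⟨hC.isOpenMap_orbitMap x, hC.isClosed_orbit x, hC.isCompact_stabilizer x,
    _, quotientStabilizerHomeomorphOrbit_smul x (hC.isOpenMap_orbitMap x)⟩

/-- Let `G` be a locally compact Hausdorff group and `X` a Tychonoff Cartan
`G`-space. Then for every `x ∈ X`: (1) the map `g ↦ g • x` is an open map of `G` onto the orbit
`G(x)`; (2) the orbit `G(x)` is closed, the stabilizer `G_x` is compact, and `G(x)` is
`G`-homeomorphic to `G / G_x`. -/
theorem statement4 {G X : Type*} [Group G] [TopologicalSpace G] [IsTopologicalGroup G]
    [LocallyCompactSpace G] [T2Space G]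
    [TopologicalSpace X] [MulAction G X] [ContinuousSMul G X] [T35Space X]
    (hC : IsCartan G X) (x : X) :
    IsOpenMap (fun g : G => (⟨g • x, MulAction.mem_orbit x g⟩ : MulAction.orbit G x)) ∧
    IsClosed (MulAction.orbit G x) ∧
    IsCompact (MulAction.stabilizer G x : Set G) ∧
    ∃ f : G ⧸ MulAction.stabilizer G x ≃ₜ MulAction.orbit G x,
      ∀ (g : G) (q : G ⧸ MulAction.stabilizer G x), (f (g • q) : X) = g • (f q : X) :=
  statement4_general hC x
end

section
/- Let G be a topological group and X, Y be G-spaces. Assume {x_1,…,x_n} ⊆ X and {y_1,…,y_n} ⊆ Y are finite sets of points satisfying, for each i ∈ {1,…,n}: (A) the map θ_{x_i} : G → G(x_i), g ↦ g x_i, is open onto the orbit G(x_i) (with its subspace topology); (B) there exist a G-invariant open neighborhood U_i ⊆ X of G(x_i) and a continuous G-equivariant retraction r_i : U_i → G(x_i); (C) G_{x_i} ≤ G_{y_i}; and (D) G(x_i) ∩ G(x_j) = ∅ whenever i ≠ j. If, moreover, Y is G-equiconnected, the orbit space X/G is Tychonoff, and there exists at least one continuous G-equivariant map from X to Y, then there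 exists a continuous G-equivariant map ψ : X → Y such that ψ(x_i) = y_i for every i ∈ {1,…,n}. -/
/-!
The points are handled one at a time. To move the value of an equivariant map `φ` at `xᵢ` to
`yᵢ`, take the equivariant map `F : G(xᵢ) → Y`, `g • xᵢ ↦ g • yᵢ` (well defined by (C),
continuous by (A)), and an invariant bump `μ : X → [0,1]` pulled back from the Tychonoff orbit
space, equal to `1` at `xᵢ` and vanishing near `X \ Uᵢ` and at the other `xⱼ` (by (D) their
orbits are other points of `X/G`). On `Uᵢ` the new map is `z ↦ h(φ z, F(rᵢ z), μ z)` for the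
equiconnecting homotopy `h`, and `φ` elsewhere.
-/

/-- A `G`-space `Y` is `G`-equiconnected: there is a continuous map `h : Y × Y × [0,1] → Y`
with `h (a,b,0) = a`, `h (a,b,1) = b`, `h (a,a,t) = a` and `h (g•a, g•b, t) = g • h (a,b,t)`. -/
def GEquiconnected (G Y : Type*) [SMul G Y] [TopologicalSpace Y] : Prop :=
  ∃ h : Y × Y × unitInterval → Y, Continuous h ∧
    (∀ a b : Y, h (a, b, 0) = a) ∧ (∀ a b : Y, h (a, b, 1) = b) ∧
    (∀ (a : Y) (t : unitInterval), h (a, a, t) = a) ∧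
    ∀ (g : G) (a b : Y) (t : unitInterval), h (g • a, g • b, t) = g • h (a, b, t)

open MulAction Set Filter Topology unitInterval Function

theorem continuous_piecewise_of_eventually_eq {X Y : Type*} [TopologicalSpace X]
    [TopologicalSpace Y] {U : Set X} [DecidablePred (· ∈ U)] (hU : IsOpen U) {f g : X → Y}
    (hf : ContinuousOn f U) (hg : Continuous g)
    (hfg : ∀ z ∉ U, ∀ᶠ w in 𝓝 z, w ∈ U → f w = g w) :
    Continuous (U.piecewise f g) := by
  refine continuous_iff_continuousAt.2 fun z => ?_
  by_cases hz : z ∈ U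
  · refine (hf.continuousAt (hU.mem_nhds hz)).congr ?_
    filter_upwards [hU.mem_nhds hz] with w hw
    exact (piecewise_eq_of_mem _ _ _ hw).symm
  · refine hg.continuousAt.congr ?_
    filter_upwards [hfg z hz] with w hw
    by_cases hwU : w ∈ U
    · rw [piecewise_eq_of_mem _ _ _ hwU, hw hwU]
    · rw [piecewise_eq_of_notMem _ _ _ hwU]

theorem CompletelyRegularSpace.exists_eq_one_eventually_eq_zero {Q : Type*}
    [TopologicalSpace Q] [CompletelyRegularSpace Q] {K : Set Q} (hK : IsClosed K) {q : Q}
    (hq : q ∉ K) : ∃ μ : Q → I, Continuous μ ∧ μ q = 1 ∧ ∀ᶠ p in 𝓝ˢ K, μ p = 0 := by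
  obtain ⟨f, hfc, hfq, hfK⟩ := CompletelyRegularSpace.completely_regular q K hK hq
  refine ⟨fun p => projIcc 0 1 zero_le_one (1 - 2 * f p), by fun_prop, by simp [hfq], ?_⟩
  have hf : Tendsto (fun p => (f p : ℝ)) (𝓝ˢ K) (𝓝 1) :=
    (continuous_subtype_val.tendsto _).comp (hfc.tendsto_nhdsSet_nhds hfK)
  filter_upwards [hf.eventually (lt_mem_nhds one_half_lt_one)] with p hp
  exact projIcc_eq_zero.2 (by linarith)

section

variable {G X Y : Type*} [Group G] [MulAction G X] [MulAction G Y]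

theorem factorsThrough_smul_of_stabilizer_le {x : X} {y : Y}
    (h : stabilizer G x ≤ stabilizer G y) :
    FactorsThrough (fun g : G => g • y) (fun g : G => g • x) := by
  intro a b (hab : a • x = b • x)
  have hy := h (show b⁻¹ * a ∈ stabilizer G x by
    rw [mem_stabilizer_iff, mul_smul, hab, inv_smul_smul])
  rwa [mem_stabilizer_iff, mul_smul, inv_smul_eq_iff] at hy

theorem exists_continuousOn_orbit_smul_eq [TopologicalSpace G] [TopologicalSpace X]
    [TopologicalSpace Y] [ContinuousSMul G X] [ContinuousSMul G Y] {x : X} {y : Y}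
    (hA : IsOpenMap (fun g : G => (⟨g • x, mem_orbit x g⟩ : orbit G x)))
    (hC : stabilizer G x ≤ stabilizer G y) :
    ∃ F : X → Y, ContinuousOn F (orbit G x) ∧ ∀ g : G, F (g • x) = g • y := by
  have hF := (factorsThrough_smul_of_stabilizer_le hC).extend_apply (fun _ => y)
  refine ⟨extend (fun g : G => g • x) (fun g => g • y) (fun _ => y), ?_, hF⟩
  have hq : IsQuotientMap (fun g : G => (⟨g • x, mem_orbit x g⟩ : orbit G x)) :=
    hA.isQuotientMap (by fun_prop) (by rintro ⟨_, g, rfl⟩; exact ⟨g, rfl⟩)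
  rw [continuousOn_iff_continuous_domRestrict, hq.continuous_iff]
  simpa only [comp_def, domRestrict_apply, hF] using (by fun_prop : Continuous fun g : G => g • y)

theorem exists_invariant_bump [TopologicalSpace X] [ContinuousConstSMul G X]
    [T35Space (Quotient (orbitRel G X))] {U : Set X} (hU : IsOpen U)
    (hUinv : ∀ g : G, ∀ u ∈ U, g • u ∈ U) {x₀ : X} (hx₀ : x₀ ∈ U) {S : Set X}
    (hS : S.Finite) (hSx₀ : ∀ s ∈ S, s ∉ orbit G x₀) :
    ∃ μ : X → I, Continuous μ ∧ (∀ (g : G) z, μ (g • z) = μ z) ∧ μ x₀ = 1 ∧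
      ∀ z ∈ Uᶜ ∪ S, ∀ᶠ w in 𝓝 z, μ w = 0 := by
  let π : X → Quotient (orbitRel G X) := Quotient.mk _
  have hπU : ∀ z, π z ∈ π '' U → z ∈ U := by
    rintro z ⟨u, hu, huz⟩
    obtain ⟨g, rfl⟩ := orbitRel_apply.1 (Quotient.exact huz.symm)
    exact hUinv g u hu
  have hK : IsClosed ((π '' U)ᶜ ∪ π '' S) :=
    (isOpenMap_quotient_mk'_mul U hU).isClosed_compl.union (hS.image π).isClosed
  have hx₀K : π x₀ ∉ (π '' U)ᶜ ∪ π '' S := by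
    rintro (hx | ⟨s, hs, hsx⟩)
    · exact hx (mem_image_of_mem π hx₀)
    · exact hSx₀ s hs (orbitRel_apply.1 (Quotient.exact hsx))
  obtain ⟨μ, hμc, hμx₀, hμK⟩ := CompletelyRegularSpace.exists_eq_one_eventually_eq_zero hK hx₀K
  refine ⟨μ ∘ π, hμc.comp continuous_quot_mk, fun g z => ?_, hμx₀, fun z hz => ?_⟩
  · exact congrArg μ (Quotient.sound (orbitRel_apply.2 (mem_orbit z g)))
  · have hzK : π z ∈ (π '' U)ᶜ ∪ π '' S :=
      hz.imp (fun hzU hzπ => hzU (hπU z hzπ)) (mem_image_of_mem π)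
    exact (continuous_quot_mk.tendsto z).eventually (hμK.filter_mono (nhds_le_nhdsSet hzK))

theorem exists_continuous_equivariant_update [TopologicalSpace G] [TopologicalSpace X]
    [TopologicalSpace Y] [ContinuousSMul G X] [ContinuousSMul G Y]
    [T35Space (Quotient (orbitRel G X))] {x₀ : X} {y₀ : Y}
    (hA : IsOpenMap (fun g : G => (⟨g • x₀, mem_orbit x₀ g⟩ : orbit G x₀)))
    (hB : ∃ U : Set X, IsOpen U ∧ (∀ (g : G), ∀ u ∈ U, g • u ∈ U) ∧ orbit G x₀ ⊆ U ∧
      ∃ r : X → X, ContinuousOn r U ∧ (∀ z ∈ U, r z ∈ orbit G x₀) ∧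
        (∀ z ∈ orbit G x₀, r z = z) ∧ ∀ (g : G), ∀ z ∈ U, r (g • z) = g • r z)
    (hC : stabilizer G x₀ ≤ stabilizer G y₀) (hY : GEquiconnected G Y) {S : Set X}
    (hS : S.Finite) (hSx₀ : ∀ s ∈ S, s ∉ orbit G x₀) {φ : X → Y} (hφ : Continuous φ)
    (hφe : ∀ (g : G) z, φ (g • z) = g • φ z) :
    ∃ ψ : X → Y, Continuous ψ ∧ (∀ (g : G) z, ψ (g • z) = g • ψ z) ∧ ψ x₀ = y₀ ∧
      EqOn ψ φ S := by
  classical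
  obtain ⟨U, hU, hUinv, hx₀U, r, hrc, hrU, hrfix, hre⟩ := hB
  obtain ⟨h, hhc, h0, h1, -, hhe⟩ := hY
  obtain ⟨F, hFc, hF⟩ := exists_continuousOn_orbit_smul_eq hA hC
  obtain ⟨μ, hμc, hμinv, hμx₀, hμ0⟩ :=
    exists_invariant_bump hU hUinv (hx₀U (mem_orbit_self x₀)) hS hSx₀
  have hFe : ∀ (g : G), ∀ z ∈ orbit G x₀, F (g • z) = g • F z := by
    rintro g _ ⟨c, rfl⟩
    simp only [smul_smul, hF]
  have hsmul_mem : ∀ (g : G) z, g • z ∈ U ↔ z ∈ U :=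
    fun g z => ⟨fun hz => by simpa using hUinv g⁻¹ _ hz, hUinv g z⟩
  refine ⟨U.piecewise (fun z => h (φ z, F (r z), μ z)) φ, ?_, fun g z => ?_, ?_, fun s hs => ?_⟩
  · refine continuous_piecewise_of_eventually_eq hU ?_ hφ fun z hz => ?_
    · exact hhc.comp_continuousOn
        (hφ.continuousOn.prodMk ((hFc.comp hrc hrU).prodMk hμc.continuousOn))
    · exact (hμ0 z (Or.inl hz)).mono fun w hw _ => by simp only [hw, h0]
  · by_cases hz : z ∈ U
    · simp only [piecewise_eq_of_mem _ _ _ ((hsmul_mem g z).2 hz), piecewise_eq_of_mem _ _ _ hz,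
        hφe, hre g z hz, hFe g _ (hrU z hz), hμinv, hhe]
    · simp only [piecewise_eq_of_notMem _ _ _ (mt (hsmul_mem g z).1 hz),
        piecewise_eq_of_notMem _ _ _ hz, hφe]
  · rw [piecewise_eq_of_mem _ _ _ (hx₀U (mem_orbit_self x₀)), hrfix _ (mem_orbit_self x₀), hμx₀,
      h1]
    simpa using hF 1
  · by_cases hsU : s ∈ U
    · rw [piecewise_eq_of_mem _ _ _ hsU, (hμ0 s (Or.inr hs)).self_of_nhds, h0]
    · exact piecewise_eq_of_notMem _ _ _ hsU

end

theorem statement8_general {G X Y : Type*} [Group G] [TopologicalSpace G]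
    [TopologicalSpace X] [MulAction G X] [ContinuousSMul G X]
    [TopologicalSpace Y] [MulAction G Y] [ContinuousSMul G Y]
    (n : ℕ) (x : Fin n → X) (y : Fin n → Y)
    (hA : ∀ i, IsOpenMap
      (fun g : G => (⟨g • x i, MulAction.mem_orbit (x i) g⟩ : MulAction.orbit G (x i))))
    (hB : ∀ i, ∃ U : Set X, IsOpen U ∧ (∀ (g : G), ∀ u ∈ U, g • u ∈ U) ∧
      MulAction.orbit G (x i) ⊆ U ∧
      ∃ r : X → X, ContinuousOn r U ∧ (∀ z ∈ U, r z ∈ MulAction.orbit G (x i)) ∧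
        (∀ z ∈ MulAction.orbit G (x i), r z = z) ∧
        ∀ (g : G), ∀ z ∈ U, r (g • z) = g • r z)
    (hC : ∀ i, MulAction.stabilizer G (x i) ≤ MulAction.stabilizer G (y i))
    (hD : ∀ i j, i ≠ j → Disjoint (MulAction.orbit G (x i)) (MulAction.orbit G (x j)))
    (hY : GEquiconnected G Y)
    (hT : T35Space (Quotient (MulAction.orbitRel G X)))
    (hne : ∃ φ : X → Y, Continuous φ ∧ ∀ (g : G) (z : X), φ (g • z) = g • φ z) :
    ∃ ψ : X → Y, Continuous ψ ∧ (∀ (g : G) (z : X), ψ (g • z) = g • ψ z) ∧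
      ∀ i, ψ (x i) = y i := by
  have key : ∀ s : Finset (Fin n), ∃ ψ : X → Y, Continuous ψ ∧
      (∀ (g : G) z, ψ (g • z) = g • ψ z) ∧ ∀ j ∈ s, ψ (x j) = y j := by
    intro s
    induction s using Finset.induction_on with
    | empty =>
      obtain ⟨φ, hφ, hφe⟩ := hne
      exact ⟨φ, hφ, hφe, by simp⟩
    | insert i s hi ih =>
      obtain ⟨ψ, hψ, hψe, hψs⟩ := ih
      have hsx : ∀ z ∈ x '' s, z ∉ orbit G (x i) := by
        rintro _ ⟨j, hj, rfl⟩
        exact disjoint_left.1 (hD j i (ne_of_mem_of_not_mem hj hi)) (mem_orbit_self _)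
      obtain ⟨ψ', hψ', hψ'e, hψ'i, hψ's⟩ := exists_continuous_equivariant_update (hA i) (hB i)
        (hC i) hY (s.finite_toSet.image x) hsx hψ hψe
      refine ⟨ψ', hψ', hψ'e, Finset.forall_mem_insert _ _ _ |>.2 ⟨hψ'i, fun j hj => ?_⟩⟩
      rw [hψ's (mem_image_of_mem x hj), hψs j hj]
  obtain ⟨ψ, hψ, hψe, hψx⟩ := key Finset.univ
  exact ⟨ψ, hψ, hψe, fun i => hψx i (Finset.mem_univ i)⟩

/-- Let `G` be a topological group and `X`, `Y` `G`-spaces, and let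
`x₁,…,xₙ ∈ X`, `y₁,…,yₙ ∈ Y` satisfy: (A) each map `g ↦ g • xᵢ` is open onto the orbit
`G(xᵢ)`; (B) each orbit `G(xᵢ)` admits a `G`-invariant open neighborhood `Uᵢ` and a continuous
`G`-equivariant retraction `rᵢ : Uᵢ → G(xᵢ)`; (C) `G_{xᵢ} ≤ G_{yᵢ}`; (D) the orbits `G(xᵢ)`
are pairwise disjoint. If moreover `Y` is `G`-equiconnected, the orbit space `X/G` is
Tychonoff, and there is at least one continuous `G`-equivariant map `X → Y`, then there is a
continuous `G`-equivariant map `ψ : X → Y` with `ψ xᵢ = yᵢ` for all `i`. -/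
theorem statement8 {G X Y : Type*} [Group G] [TopologicalSpace G] [IsTopologicalGroup G]
    [TopologicalSpace X] [MulAction G X] [ContinuousSMul G X]
    [TopologicalSpace Y] [MulAction G Y] [ContinuousSMul G Y]
    (n : ℕ) (x : Fin n → X) (y : Fin n → Y)
    (hA : ∀ i, IsOpenMap
      (fun g : G => (⟨g • x i, MulAction.mem_orbit (x i) g⟩ : MulAction.orbit G (x i))))
    (hB : ∀ i, ∃ U : Set X, IsOpen U ∧ (∀ (g : G), ∀ u ∈ U, g • u ∈ U) ∧
      MulAction.orbit G (x i) ⊆ U ∧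
      ∃ r : X → X, ContinuousOn r U ∧ (∀ z ∈ U, r z ∈ MulAction.orbit G (x i)) ∧
        (∀ z ∈ MulAction.orbit G (x i), r z = z) ∧
        ∀ (g : G), ∀ z ∈ U, r (g • z) = g • r z)
    (hC : ∀ i, MulAction.stabilizer G (x i) ≤ MulAction.stabilizer G (y i))
    (hD : ∀ i j, i ≠ j → Disjoint (MulAction.orbit G (x i)) (MulAction.orbit G (x j)))
    (hY : GEquiconnected G Y)
    (hT : T35Space (Quotient (MulAction.orbitRel G X)))
    (hne : ∃ φ : X → Y, Continuous φ ∧ ∀ (g : G) (z : X), φ (g • z) = g • φ z) :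
    ∃ ψ : X → Y, Continuous ψ ∧ (∀ (g : G) (z : X), ψ (g • z) = g • ψ z) ∧
      ∀ i, ψ (x i) = y i :=
  statement8_general n x y hA hB hC hD hY hT hne
end

section
/- Let n ≥ 1 and let 𝒦ⁿ₁₋ denote the space of all nonempty compact convex subsets of ℝⁿ of affine dimension at most 1 (i.e., all segments [c,d], including singletons), equipped with the Hausdorff metric and with the natural action of the group Aff(n) of invertible affine transformations given by (g,K) ↦ gK. Then the midpoint map ψ : 𝒦ⁿ₁₋ → ℝⁿ defined by ψ([c,d]) = (c+d)/2 is continuous and Aff(n)-equivariant, and it is the unique continuous Aff(n)-equivariant map from 𝒦ⁿ₁₋ to ℝⁿ. -/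
/-- The affine dimension of a subset of `ℝⁿ`: the dimension of its affine span. -/
noncomputable def affDim {n : ℕ} (s : Set (EuclideanSpace ℝ (Fin n))) : ℕ :=
  Module.finrank ℝ (affineSpan ℝ s).direction

/-- The space `𝒦ⁿ₁₋` of all nonempty compact convex subsets of `ℝⁿ` of affine dimension at
most `1` (segments, possibly degenerate), with the Hausdorff metric. -/
abbrev SegSpace (n : ℕ) :=
  {K : ConvexBody (EuclideanSpace ℝ (Fin n)) // affDim (K : Set (EuclideanSpace ℝ (Fin n))) ≤ 1}

/-! The midpoint of a segment is the centre of its coordinate bounding box, and each extremum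
`K ↦ sup_K xᵢ`, `K ↦ inf_K xᵢ` is 1-Lipschitz for the Hausdorff metric; this gives continuity.
Uniqueness does not even need continuity: the point reflection through the midpoint of a segment
maps the segment onto itself, so an equivariant map sends the segment to the only fixed point of
that reflection. -/

open Set Topology

section Segment

variable {E : Type*} [NormedAddCommGroup E] [NormedSpace ℝ E]

theorem IsCompact.exists_eq_segment_of_collinear {s : Set E} (hs : IsCompact s)
    (hconv : Convex ℝ s) (hne : s.Nonempty) (hcol : Collinear ℝ s) :
    ∃ c d, s = segment ℝ c d := by
  rcases hne.exists_eq_singleton_or_nontrivial with ⟨p, rfl⟩ | ⟨p, hp, q, hq, hpq⟩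
  · exact ⟨p, p, (segment_same ℝ p).symm⟩
  set f : ℝ →ᵃ[ℝ] E := AffineMap.lineMap p q
  -- `s` lies on the line `f`; the extreme parameters `a, b` of `f ⁻¹' s` give its endpoints.
  have hf : IsClosedEmbedding f := by
    have hf_eq : ⇑f = (· + p) ∘ fun t : ℝ => t • (q - p) := by
      ext t; simp [f, AffineMap.lineMap_apply]
    rw [hf_eq]
    exact (Homeomorph.addRight p).isClosedEmbedding.comp
      (isClosedEmbedding_smul_left (sub_ne_zero.2 hpq.symm))
  have hT : IsCompact (f ⁻¹' s) := hf.isCompact_preimage hs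
  have hTne : (f ⁻¹' s).Nonempty := ⟨0, by simpa [f] using hp⟩
  obtain ⟨a, ha, ha_le⟩ := hT.exists_isLeast hTne
  obtain ⟨b, hb, hb_ge⟩ := hT.exists_isGreatest hTne
  refine ⟨f a, f b, Subset.antisymm (fun x hx => ?_) (hconv.segment_subset ha hb)⟩
  obtain ⟨t, rfl⟩ := mem_affineSpan_pair_iff_exists_lineMap_eq.1
    (hcol.mem_affineSpan_of_mem_of_ne hp hq hx hpq)
  rw [← image_segment, segment_eq_Icc (ha_le hb)]
  exact mem_image_of_mem f ⟨ha_le hx, hb_ge hx⟩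

end Segment

section SupportBounds

theorem LipschitzWith.sSup_image_le_add {α : Type*} [PseudoMetricSpace α] {g : α → ℝ}
    {C : NNReal} (hg : LipschitzWith C g) {s t : Set α} (hs : IsCompact s) (hs' : s.Nonempty)
    (ht : IsCompact t) (hst : Metric.hausdorffEDist s t ≠ ⊤) :
    sSup (g '' s) ≤ sSup (g '' t) + C * Metric.hausdorffDist s t := by
  obtain ⟨x, hx, hgx⟩ := (hs.image hg.continuous).sSup_mem (hs'.image g)
  obtain ⟨y, hy, hxy⟩ :=
    ht.exists_infDist_eq_dist (Metric.nonempty_of_hausdorffEDist_ne_top hs' hst) x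
  calc sSup (g '' s) = g x := hgx.symm
    _ ≤ g y + C * dist x y := by
      have := hg.dist_le_mul x y
      rw [Real.dist_eq] at this
      linarith [le_abs_self (g x - g y)]
    _ ≤ sSup (g '' t) + C * Metric.hausdorffDist s t := by
      gcongr
      · exact le_csSup (ht.image hg.continuous).bddAbove (mem_image_of_mem g hy)
      · rw [← hxy]; exact Metric.infDist_le_hausdorffDist_of_mem hx hst

variable {V : Type*} [SeminormedAddCommGroup V] [NormedSpace ℝ V] {g : V → ℝ} {C : NNReal}

theorem ConvexBody.lipschitzWith_sSup_image (hg : LipschitzWith C g) :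
    LipschitzWith C fun K : ConvexBody V => sSup (g '' K) :=
  LipschitzWith.of_le_add_mul C fun K L =>
    hg.sSup_image_le_add K.isCompact K.nonempty L.isCompact ConvexBody.hausdorffEDist_ne_top

theorem ConvexBody.lipschitzWith_sInf_image (hg : LipschitzWith C g) :
    LipschitzWith C fun K : ConvexBody V => sInf (g '' K) := by
  have hneg : (fun K : ConvexBody V => sInf (g '' K)) =
      -fun K : ConvexBody V => sSup ((-g) '' K) := by
    funext K
    rw [Pi.neg_apply, Real.sInf_def, ← image_neg_eq_neg, image_image]
    rfl
  exact hneg ▸ (ConvexBody.lipschitzWith_sSup_image hg.neg).neg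

end SupportBounds

section BoundingBox

variable {ι : Type*}

noncomputable def boundingBoxCenter (s : Set (EuclideanSpace ℝ ι)) : EuclideanSpace ℝ ι :=
  WithLp.toLp 2 fun i => (sInf ((· i) '' s) + sSup ((· i) '' s)) / 2

theorem boundingBoxCenter_segment (c d : EuclideanSpace ℝ ι) :
    boundingBoxCenter (segment ℝ c d) = midpoint ℝ c d := by
  ext i
  have hi : (· i) '' segment ℝ c d = Icc (min (c i) (d i)) (max (c i) (d i)) := by
    rw [← uIcc, ← segment_eq_uIcc]
    exact image_segment ℝ
      (EuclideanSpace.proj i : EuclideanSpace ℝ ι →L[ℝ] ℝ).toLinearMap.toAffineMap c d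
  simp only [boundingBoxCenter, WithLp.ofLp_toLp]
  rw [hi, csInf_Icc min_le_max, csSup_Icc min_le_max, min_add_max,
    midpoint_eq_smul_add]
  simp only [invOf_eq_inv, smul_add, PiLp.add_apply, PiLp.smul_apply, smul_eq_mul]
  ring

theorem continuous_boundingBoxCenter [Fintype ι] :
    Continuous fun K : ConvexBody (EuclideanSpace ℝ ι) =>
      boundingBoxCenter (K : Set (EuclideanSpace ℝ ι)) := by
  refine (PiLp.continuous_toLp 2 _).comp (continuous_pi fun i => ?_)
  have hi : LipschitzWith 1 fun x : EuclideanSpace ℝ ι => x i := by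
    simpa [Function.comp_def] using
      (LipschitzWith.eval i).comp (PiLp.lipschitzWith_ofLp 2 fun _ : ι => ℝ)
  exact ((ConvexBody.lipschitzWith_sInf_image hi).continuous.add
    (ConvexBody.lipschitzWith_sSup_image hi).continuous).div_const 2

end BoundingBox

theorem collinear_of_affDim_le_one {n : ℕ} {s : Set (EuclideanSpace ℝ (Fin n))}
    (h : affDim s ≤ 1) : Collinear ℝ s := by
  rwa [collinear_iff_finrank_le_one, ← direction_affineSpan]

namespace SegSpace

variable {n : ℕ}

theorem exists_eq_segment (K : SegSpace n) :
    ∃ c d, (K.1 : Set (EuclideanSpace ℝ (Fin n))) = segment ℝ c d :=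
  K.1.isCompact.exists_eq_segment_of_collinear K.1.convex K.1.nonempty
    (collinear_of_affDim_le_one K.2)

def IsAffEquivariant (ψ : SegSpace n → EuclideanSpace ℝ (Fin n)) : Prop :=
  ∀ (g : EuclideanSpace ℝ (Fin n) ≃ᵃ[ℝ] EuclideanSpace ℝ (Fin n)) (K L : SegSpace n),
    (L.1 : Set (EuclideanSpace ℝ (Fin n))) = g '' (K.1 : Set (EuclideanSpace ℝ (Fin n))) →
    ψ L = g (ψ K)

theorem isAffEquivariant_boundingBoxCenter :
    IsAffEquivariant fun K : SegSpace n =>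
      boundingBoxCenter (K.1 : Set (EuclideanSpace ℝ (Fin n))) := by
  intro g K L hL
  dsimp only
  obtain ⟨c, d, hK⟩ := K.exists_eq_segment
  rw [hL, hK, ← g.coe_toAffineMap, image_segment, boundingBoxCenter_segment,
    boundingBoxCenter_segment, g.coe_toAffineMap, g.map_midpoint]

theorem IsAffEquivariant.apply_eq_midpoint {ψ : SegSpace n → EuclideanSpace ℝ (Fin n)}
    (hψ : IsAffEquivariant ψ) {K : SegSpace n} {c d : EuclideanSpace ℝ (Fin n)}
    (hK : (K.1 : Set (EuclideanSpace ℝ (Fin n))) = segment ℝ c d) : ψ K = midpoint ℝ c d := by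
  set σ := AffineEquiv.pointReflection ℝ (midpoint ℝ c d)
  have hσK : (K.1 : Set (EuclideanSpace ℝ (Fin n))) = σ '' K.1 := by
    rw [hK, ← σ.coe_toAffineMap, image_segment, σ.coe_toAffineMap,
      AffineEquiv.pointReflection_midpoint_left, AffineEquiv.pointReflection_midpoint_right,
      segment_symm]
  exact (AffineEquiv.pointReflection_fixed_iff_of_module ℝ).1 (hψ σ K K hσK).symm

end SegSpace

theorem statement11_general (n : ℕ) :
    ∃ ψ : SegSpace n → EuclideanSpace ℝ (Fin n),
      (Continuous ψ ∧
        (∀ (g : EuclideanSpace ℝ (Fin n) ≃ᵃ[ℝ] EuclideanSpace ℝ (Fin n)) (K L : SegSpace n),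
          (L.1 : Set (EuclideanSpace ℝ (Fin n))) = g '' (K.1 : Set (EuclideanSpace ℝ (Fin n))) →
          ψ L = g (ψ K)) ∧
        (∀ (K : SegSpace n) (c d : EuclideanSpace ℝ (Fin n)),
          (K.1 : Set (EuclideanSpace ℝ (Fin n))) = segment ℝ c d → ψ K = midpoint ℝ c d)) ∧
      ∀ ψ' : SegSpace n → EuclideanSpace ℝ (Fin n), Continuous ψ' →
        (∀ (g : EuclideanSpace ℝ (Fin n) ≃ᵃ[ℝ] EuclideanSpace ℝ (Fin n)) (K L : SegSpace n),
          (L.1 : Set (EuclideanSpace ℝ (Fin n))) = g '' (K.1 : Set (EuclideanSpace ℝ (Fin n))) →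
          ψ' L = g (ψ' K)) →
        ψ' = ψ := by
  refine ⟨fun K => boundingBoxCenter (K.1 : Set (EuclideanSpace ℝ (Fin n))),
    ⟨continuous_boundingBoxCenter.comp continuous_subtype_val,
      SegSpace.isAffEquivariant_boundingBoxCenter,
      fun K c d hK => by dsimp only; rw [hK, boundingBoxCenter_segment]⟩,
    fun ψ' _ hψ' => funext fun K => ?_⟩
  obtain ⟨c, d, hK⟩ := K.exists_eq_segment
  rw [SegSpace.IsAffEquivariant.apply_eq_midpoint hψ' hK, hK, boundingBoxCenter_segment]

/-- For `n ≥ 1`, the midpoint map `ψ : 𝒦ⁿ₁₋ → ℝⁿ`, `ψ [c,d] = (c+d)/2`, is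
continuous and `Aff(n)`-equivariant, and it is the unique continuous `Aff(n)`-equivariant map
from `𝒦ⁿ₁₋` to `ℝⁿ`. -/
theorem statement11 (n : ℕ) (hn : 1 ≤ n) :
    ∃ ψ : SegSpace n → EuclideanSpace ℝ (Fin n),
      (Continuous ψ ∧
        (∀ (g : EuclideanSpace ℝ (Fin n) ≃ᵃ[ℝ] EuclideanSpace ℝ (Fin n)) (K L : SegSpace n),
          (L.1 : Set (EuclideanSpace ℝ (Fin n))) = g '' (K.1 : Set (EuclideanSpace ℝ (Fin n))) →
          ψ L = g (ψ K)) ∧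
        (∀ (K : SegSpace n) (c d : EuclideanSpace ℝ (Fin n)),
          (K.1 : Set (EuclideanSpace ℝ (Fin n))) = segment ℝ c d → ψ K = midpoint ℝ c d)) ∧
      ∀ ψ' : SegSpace n → EuclideanSpace ℝ (Fin n), Continuous ψ' →
        (∀ (g : EuclideanSpace ℝ (Fin n) ≃ᵃ[ℝ] EuclideanSpace ℝ (Fin n)) (K L : SegSpace n),
          (L.1 : Set (EuclideanSpace ℝ (Fin n))) = g '' (K.1 : Set (EuclideanSpace ℝ (Fin n))) →
          ψ' L = g (ψ' K)) →
        ψ' = ψ :=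
  statement11_general n
end
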